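/- Let T be a probability distribution on X × Y with marginal T_X, and fix ρ > 0, ε > 0, p ≥ 1 (all relevant integrands measurable and integrable). Then for every pair of score functions f, f* : X → ℝ^C: R^{rob}_T(f) ≤ disp^{rob,(ρ)}_{T_X}(f*, f) + R^{(ρ)}_T(f*). -/

import Mathlib

noncomputable section
open MeasureTheory Finset Set

namespace RobustUDA

/-- The input space: `ℝ^d`. -/
abbrev Inp (d : ℕ) := Fin d → ℝ

variable {d C : ℕ}

/-- `ℓ_p`-norm of a vector in `ℝ^d`. -/
def pnorm (p : ℝ) (v : Inp d) : ℝ := (∑ i, |v i| ^ p) ^ (1 / p)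

/-- The `ε`-ball centered at `x` in the `ℓ_p`-norm. -/
def ball (p ε : ℝ) (x : Inp d) : Set (Inp d) := {x' | pnorm p (fun i => x i - x' i) ≤ ε}

open Classical in
/-- Indicator function of a proposition, real valued. -/
def ind (P : Prop) : ℝ := if P then 1 else 0

/-- The ramp function `Φ_ρ`. -/
def ramp (ρ t : ℝ) : ℝ := if t ≤ 0 then 1 else if t ≤ ρ then 1 - t / ρ else 0

/-- The margin `M_f(x,y) = f_y(x) - max_{y' ≠ y} f_{y'}(x)`. -/
def margin (f : Inp d → Fin C → ℝ) (x : Inp d) (y : Fin C) : ℝ :=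
  f x y - sSup (f x '' {y' | y' ≠ y})

/-- Standard (0-1) risk of a classifier `hf` on a distribution `D` on `X × Y`. -/
def stdRisk (D : Measure (Inp d × Fin C)) (hf : Inp d → Fin C) : ℝ :=
  ∫ z, ind (z.2 ≠ hf z.1) ∂D

/-- Robust (0-1) risk of a classifier `hf`. -/
def robustRisk (p ε : ℝ) (D : Measure (Inp d × Fin C)) (hf : Inp d → Fin C) : ℝ :=
  ∫ z, sSup ((fun x' => ind (z.2 ≠ hf x')) '' ball p ε z.1) ∂D

/-- Margin risk `R^{(ρ)}_D(f)`. -/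
def marginRisk (ρ : ℝ) (D : Measure (Inp d × Fin C)) (f : Inp d → Fin C → ℝ) : ℝ :=
  ∫ z, ramp ρ (margin f z.1 z.2) ∂D

/-- Robust margin risk `R^{rob,(ρ)}_D(f)`. -/
def robustMarginRisk (p ε ρ : ℝ) (D : Measure (Inp d × Fin C)) (f : Inp d → Fin C → ℝ) : ℝ :=
  ∫ z, sSup ((fun x' => ramp ρ (margin f x' z.2)) '' ball p ε z.1) ∂D

/-- Margin disparity `disp^{(ρ)}_{D_X}(f', f)`, where `hf'` is the classifier induced by `f'`. -/
def marginDisp (ρ : ℝ) (DX : Measure (Inp d)) (hf' : Inp d → Fin C)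
    (f : Inp d → Fin C → ℝ) : ℝ :=
  ∫ x, ramp ρ (margin f x (hf' x)) ∂DX

/-- 0-1 robust disparity `disp^{rob}_{D_X}(f', f)`. -/
def robDisp (p ε : ℝ) (DX : Measure (Inp d)) (hf' hf : Inp d → Fin C) : ℝ :=
  ∫ x, sSup ((fun x' => ind (hf' x ≠ hf x')) '' ball p ε x) ∂DX

/-- Robust margin disparity `disp^{rob,(ρ)}_{D_X}(f', f)`. -/
def robMarginDisp (p ε ρ : ℝ) (DX : Measure (Inp d)) (hf' : Inp d → Fin C)
    (f : Inp d → Fin C → ℝ) : ℝ :=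
  ∫ x, sSup ((fun x' => ramp ρ (margin f x' (hf' x))) '' ball p ε x) ∂DX

/-- Point-wise local Lipschitz constant `L_f(x, ε)` (w.r.t. the `ℓ_p` ball and `ℓ₁` output norm). -/
def locLip (p ε : ℝ) (f : Inp d → Fin C → ℝ) (x : Inp d) : ℝ :=
  sSup ((fun x' => (∑ c, |f x' c - f x c|) / pnorm p (fun i => x' i - x i)) ''
    {x' | x' ∈ ball p ε x ∧ x' ≠ x})

/-- Topological support of a measure on the input space. -/
def msupport (μ : Measure (Inp d)) : Set (Inp d) :=
  {x | ∀ U : Set (Inp d), IsOpen U → x ∈ U → 0 < μ U}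

/-- Local Lipschitz constant `L_f(D_X, ε)` over the support of `D_X`. -/
def locLipOn (p ε : ℝ) (f : Inp d → Fin C → ℝ) (μ : Measure (Inp d)) : ℝ :=
  sSup (locLip p ε f '' msupport μ)

/-- Robust margin disparity discrepancy `d^{rob,(ρ)}_{f,F}(S_X, T_X)` where `cl` assigns
to each score function its induced classifier. -/
def discrepancy (p ε ρ : ℝ) (F : Set (Inp d → Fin C → ℝ))
    (cl : (Inp d → Fin C → ℝ) → Inp d → Fin C)
    (SX TX : Measure (Inp d)) (f : Inp d → Fin C → ℝ) : ℝ :=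
  sSup ((fun f' => robMarginDisp p ε ρ TX (cl f') f - marginDisp ρ SX (cl f') f) '' F)

/-- The class `Π₁F` of component functions of score functions in `F`. -/
def Pi1 (F : Set (Inp d → Fin C → ℝ)) : Set (Inp d → ℝ) :=
  {g | ∃ f ∈ F, ∃ y : Fin C, g = fun x => f x y}

/-- The class `Π_H F` where `H = {h_f : f ∈ F}` is given by the classifier assignment `cl`. -/
def PiH (F : Set (Inp d → Fin C → ℝ)) (cl : (Inp d → Fin C → ℝ) → Inp d → Fin C) :
    Set (Inp d → ℝ) :=
  {g | ∃ f ∈ F, ∃ f' ∈ F, g = fun x => f x (cl f' x)}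

/-- Rademacher complexity `ℜ_{n,D}(G)` of a class `G` of real functions on `Z`. -/
def rademacher (n : ℕ) {Z : Type*} [MeasurableSpace Z] (D : Measure Z) (G : Set (Z → ℝ)) : ℝ :=
  ∫ z : Fin n → Z, ∫ σ : Fin n → Bool,
      sSup ((fun g => (n : ℝ)⁻¹ * ∑ i, (if σ i then (1 : ℝ) else -1) * g (z i)) '' G)
    ∂(Measure.pi fun _ => (PMF.uniformOfFintype Bool).toMeasure) ∂(Measure.pi fun _ => D)

/-!
Pointwise, `1{y ≠ h_f(x')} ≤ 1{h_{f*}(x) ≠ h_f(x')} + 1{y ≠ h_{f*}(x)}`, and a misclassification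
indicator is bounded by the ramp of the corresponding margin, because a misclassified label has
nonpositive margin. Taking the supremum over `x' ∈ B_p(x, ε)` and integrating gives the claim; the
first term depends on `x` only, so its integral is taken against the marginal `T_X`.
-/

lemma ramp_nonneg (ρ t : ℝ) : 0 ≤ ramp ρ t := by
  unfold ramp
  split_ifs with h₀ hρ
  · exact zero_le_one
  · have : t / ρ ≤ 1 := div_le_one_of_le₀ hρ (by linarith)
    linarith
  · exact le_rfl

lemma ramp_le_one (ρ t : ℝ) : ramp ρ t ≤ 1 := by
  unfold ramp
  split_ifs with h₀ hρ
  · exact le_rfl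
  · have : 0 ≤ t / ρ := div_nonneg (by linarith) (by linarith)
    linarith
  · exact zero_le_one

lemma ramp_of_nonpos (ρ : ℝ) {t : ℝ} (ht : t ≤ 0) : ramp ρ t = 1 := if_pos ht

lemma ind_nonneg (P : Prop) : 0 ≤ ind P := by
  unfold ind; split_ifs <;> norm_num

lemma ind_le_one (P : Prop) : ind P ≤ 1 := by
  unfold ind; split_ifs <;> norm_num

lemma ind_ne_le_add {α : Type*} (a b c : α) : ind (a ≠ c) ≤ ind (b ≠ c) + ind (a ≠ b) := by
  unfold ind
  split_ifs <;> simp_all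

lemma margin_nonpos_of_le {f : Inp d → Fin C → ℝ} {x : Inp d} {y y' : Fin C}
    (hne : y' ≠ y) (hle : f x y ≤ f x y') : margin f x y ≤ 0 := by
  have : f x y' ≤ sSup (f x '' {y'' | y'' ≠ y}) :=
    le_csSup (Set.toFinite _).bddAbove ⟨y', hne, rfl⟩
  unfold margin
  linarith

lemma ind_ne_le_ramp_margin (ρ : ℝ) {f : Inp d → Fin C → ℝ} {x : Inp d}
    {i : Fin C} (hi : ∀ y', f x y' ≤ f x i) (y : Fin C) :
    ind (y ≠ i) ≤ ramp ρ (margin f x y) := by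
  by_cases hy : y = i
  · simpa [ind, hy] using ramp_nonneg ρ (margin f x i)
  · rw [ramp_of_nonpos ρ (margin_nonpos_of_le (Ne.symm hy) (hi y))]
    exact ind_le_one _

lemma sSup_image_le_sSup_image_add {α : Type*} {s : Set α} {φ ψ : α → ℝ} {c : ℝ}
    (hψ : BddAbove (ψ '' s)) (hψ₀ : ∀ x ∈ s, 0 ≤ ψ x) (hc : 0 ≤ c)
    (h : ∀ x ∈ s, φ x ≤ ψ x + c) : sSup (φ '' s) ≤ sSup (ψ '' s) + c := by
  refine Real.sSup_le ?_ (add_nonneg (Real.sSup_nonneg ?_) hc)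
  · rintro _ ⟨x, hx, rfl⟩
    exact (h x hx).trans (add_le_add_left (le_csSup hψ (mem_image_of_mem ψ hx)) c)
  · rintro _ ⟨x, hx, rfl⟩
    exact hψ₀ x hx

lemma integral_le_integral_map_fst_add {α β : Type*} [MeasurableSpace α] [MeasurableSpace β]
    {μ : Measure (α × β)} {F h : α × β → ℝ} {g : α → ℝ}
    (hg : Integrable g (μ.map Prod.fst)) (hh : Integrable h μ) (hF₀ : ∀ z, 0 ≤ F z)
    (hF : ∀ z, F z ≤ g z.1 + h z) :
    ∫ z, F z ∂μ ≤ ∫ x, g x ∂(μ.map Prod.fst) + ∫ z, h z ∂μ := by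
  have hfst : AEMeasurable (Prod.fst : α × β → α) μ := measurable_fst.aemeasurable
  have hg_fst : Integrable (fun z => g z.1) μ :=
    (integrable_map_measure hg.aestronglyMeasurable hfst).mp hg
  calc ∫ z, F z ∂μ ≤ ∫ z, (g z.1 + h z) ∂μ :=
        integral_mono_of_nonneg (.of_forall hF₀) (hg_fst.add hh) (.of_forall hF)
    _ = ∫ x, g x ∂(μ.map Prod.fst) + ∫ z, h z ∂μ := by
        rw [integral_add hg_fst hh, integral_map hfst hg.aestronglyMeasurable]

theorem robustRisk_le_robMarginDisp_add_marginRisk_general {d C : ℕ}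
    (ρ ε p : ℝ)
    (T : Measure (Inp d × Fin C))
    (f fs : Inp d → Fin C → ℝ) (hf hfs : Inp d → Fin C)
    (hcl : ∀ x y, f x y ≤ f x (hf x))
    (hcls : ∀ x y, fs x y ≤ fs x (hfs x))
    (hint2 : Integrable
      (fun x => sSup ((fun x' => ramp ρ (margin f x' (hfs x))) '' ball p ε x))
      (T.map Prod.fst))
    (hint3 : Integrable (fun z => ramp ρ (margin fs z.1 z.2)) T) :
    robustRisk p ε T hf ≤ robMarginDisp p ε ρ (T.map Prod.fst) hfs f + marginRisk ρ T fs := by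
  refine integral_le_integral_map_fst_add hint2 hint3 (fun z => ?_) fun ⟨x, y⟩ => ?_
  · exact Real.sSup_nonneg (by rintro _ ⟨_, -, rfl⟩; exact ind_nonneg _)
  have hbdd : BddAbove ((fun x' => ramp ρ (margin f x' (hfs x))) '' ball p ε x) :=
    ⟨1, by rintro _ ⟨_, -, rfl⟩; exact ramp_le_one _ _⟩
  refine sSup_image_le_sSup_image_add hbdd (fun _ _ => ramp_nonneg _ _) (ramp_nonneg _ _)
    fun x' _ => ?_
  calc ind (y ≠ hf x') ≤ ind (hfs x ≠ hf x') + ind (y ≠ hfs x) := ind_ne_le_add _ _ _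
    _ ≤ ramp ρ (margin f x' (hfs x)) + ramp ρ (margin fs x y) :=
        add_le_add (ind_ne_le_ramp_margin ρ (hcl x') _) (ind_ne_le_ramp_margin ρ (hcls x) _)

/-- **Proposition 4.7.** For every pair of score functions `f, f*`:
`R^{rob}_T(f) ≤ disp^{rob,(ρ)}_{T_X}(f*, f) + R^{(ρ)}_T(f*)`. -/
theorem robustRisk_le_robMarginDisp_add_marginRisk {d C : ℕ} (hC : 2 ≤ C)
    (ρ ε p : ℝ) (hρ : 0 < ρ) (hε : 0 < ε) (hp : 1 ≤ p)
    (T : Measure (Inp d × Fin C)) [IsProbabilityMeasure T]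
    (f fs : Inp d → Fin C → ℝ) (hf hfs : Inp d → Fin C)
    (hcl : ∀ x y, f x y ≤ f x (hf x))
    (hcls : ∀ x y, fs x y ≤ fs x (hfs x))
    (hint1 : Integrable (fun z => sSup ((fun x' => ind (z.2 ≠ hf x')) '' ball p ε z.1)) T)
    (hint2 : Integrable
      (fun x => sSup ((fun x' => ramp ρ (margin f x' (hfs x))) '' ball p ε x))
      (T.map Prod.fst))
    (hint3 : Integrable (fun z => ramp ρ (margin fs z.1 z.2)) T) :
    robustRisk p ε T hf ≤ robMarginDisp p ε ρ (T.map Prod.fst) hfs f + marginRisk ρ T fs :=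
  robustRisk_le_robMarginDisp_add_marginRisk_general ρ ε p T f fs hf hfs hcl hcls hint2 hint3

end RobustUDA
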